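/- (Sandwich bound for WLS variance under multiplicative variance misestimation) Let X ∈ ℝ^{n×d} have full column rank, Σ̂ and Σ be positive definite diagonal n×n matrices whose diagonal entries satisfy σ²(t)/σ̂²(t) ≤ 1 + c for all t and some c ≥ 0. Let θ̂ = (XᵀΣ̂^{−1}X)^{−1}XᵀΣ̂^{−1}(Xθ* + η) with E[η] = 0 and Cov(η) = Σ. Then for any z ∈ ℝ^d, E[(zᵀ(θ̂ − θ*))²] ≤ (1 + c) · zᵀ(XᵀΣ̂^{−1}X)^{−1}z. -/

import Mathlib

open Matrix MeasureTheory

/-- Sandwich bound for WLS variance under multiplicative variance misestimation: if the true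
and estimated diagonal variance matrices satisfy `σ²(t)/σ̂²(t) ≤ 1 + c` entrywise, and
`θ̂ = (XᵀΣ̂⁻¹X)⁻¹XᵀΣ̂⁻¹(Xθ* + η)` with `E[η] = 0`, `Cov(η) = Σ`, then for every `z`,
`E[(zᵀ(θ̂ − θ*))²] ≤ (1 + c) · zᵀ(XᵀΣ̂⁻¹X)⁻¹z`. -/
theorem stmt10 {n d : ℕ} (X : Matrix (Fin n) (Fin d) ℝ) (hX : X.rank = d)
    (S Shat : Matrix (Fin n) (Fin n) ℝ)
    (hSdiag : S.IsDiag) (hShatdiag : Shat.IsDiag)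
    (hS : S.PosDef) (hShat : Shat.PosDef)
    (c : ℝ) (hc : 0 ≤ c)
    (hratio : ∀ t, S t t / Shat t t ≤ 1 + c)
    (θs : Fin d → ℝ)
    {Ω : Type} [MeasurableSpace Ω] (μ : Measure Ω) [IsProbabilityMeasure μ]
    (η : Ω → Fin n → ℝ)
    (hint : ∀ t, Integrable (fun ω => η ω t) μ)
    (hint2 : ∀ s t, Integrable (fun ω => η ω s * η ω t) μ)
    (hmean : ∀ t, ∫ ω, η ω t ∂μ = 0)
    (hcov : ∀ s t, ∫ ω, η ω s * η ω t ∂μ = S s t) :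
    ∀ z : Fin d → ℝ,
      (∫ ω, (z ⬝ᵥ ((Xᵀ * Shat⁻¹ * X)⁻¹ *ᵥ (Xᵀ *ᵥ (Shat⁻¹ *ᵥ (X *ᵥ θs + η ω))) - θs)) ^ 2 ∂μ)
        ≤ (1 + c) * (z ⬝ᵥ (Xᵀ * Shat⁻¹ * X)⁻¹ *ᵥ z) := by
  intro z
  set P := Shat⁻¹ with hPdef
  have hPpd : P.PosDef := hShat.inv
  have hShatT : Shatᵀ = Shat := by
    ext i j
    by_cases h : i = j
    · subst h; simp
    · rw [transpose_apply, hShatdiag h, hShatdiag (Ne.symm h)]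
  have hPT : Pᵀ = P := by rw [hPdef, transpose_nonsing_inv, hShatT]
  set M := Xᵀ * P * X with hMdef
  have hMT : Mᵀ = M := by
    rw [hMdef, transpose_mul, transpose_mul, transpose_transpose, hPT]
    exact (Matrix.mul_assoc _ _ _).symm
  -- injectivity of X *ᵥ ·
  have hinj : ∀ v : Fin d → ℝ, X *ᵥ v = 0 → v = 0 := by
    intro v hv
    have h2 := LinearMap.finrank_range_add_finrank_ker X.mulVecLin
    rw [← Matrix.rank, hX, Module.finrank_fin_fun] at h2
    have hker : Module.finrank ℝ (LinearMap.ker X.mulVecLin) = 0 := by omega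
    have hbot : LinearMap.ker X.mulVecLin = ⊥ := Submodule.finrank_eq_zero.mp hker
    have : v ∈ LinearMap.ker X.mulVecLin := by
      simp [LinearMap.mem_ker, mulVecLin_apply, hv]
    rw [hbot, Submodule.mem_bot] at this
    exact this
  have hMpd : M.PosDef := by
    rw [posDef_iff_dotProduct_mulVec]
    constructor
    · show Mᴴ = M
      rw [conjTranspose_eq_transpose_of_trivial, hMT]
    · intro x hx
      have hXx : X *ᵥ x ≠ 0 := fun h => hx (hinj x h)
      have := hPpd.dotProduct_mulVec_pos hXx
      simpa [hMdef, star_trivial, ← mulVec_mulVec, dotProduct_mulVec,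
        vecMul_transpose] using this
  haveI : Invertible M := hMpd.isUnit.invertible
  have hMinv : M⁻¹ * M = 1 := inv_mul_of_invertible M
  have hMinvT : (M⁻¹)ᵀ = M⁻¹ := by rw [transpose_nonsing_inv, hMT]
  set w : Fin n → ℝ := z ᵥ* (M⁻¹ * Xᵀ * P) with hwdef
  -- pointwise identity
  have key : ∀ ω, z ⬝ᵥ (M⁻¹ *ᵥ (Xᵀ *ᵥ (P *ᵥ (X *ᵥ θs + η ω))) - θs) = w ⬝ᵥ η ω := by
    intro ω
    have h1 : M⁻¹ *ᵥ (Xᵀ *ᵥ (P *ᵥ (X *ᵥ θs))) = θs := by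
      rw [mulVec_mulVec, mulVec_mulVec, mulVec_mulVec]
      have e : M⁻¹ * Xᵀ * P * X = 1 := by
        rw [Matrix.mul_assoc, Matrix.mul_assoc, ← Matrix.mul_assoc Xᵀ, ← hMdef, hMinv]
      rw [e, one_mulVec]
    rw [mulVec_add, mulVec_add, mulVec_add, h1, add_sub_cancel_left,
      mulVec_mulVec, mulVec_mulVec, dotProduct_mulVec, hwdef]
  -- expectation computation
  have hexp : ∀ ω, (w ⬝ᵥ η ω) ^ 2 = ∑ s, ∑ t, (w s * w t) * (η ω s * η ω t) := by
    intro ω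
    rw [sq]
    simp only [dotProduct]
    rw [Finset.sum_mul_sum]
    exact Finset.sum_congr rfl fun s _ => Finset.sum_congr rfl fun t _ => by ring
  have hInt : (∫ ω, (w ⬝ᵥ η ω) ^ 2 ∂μ) = ∑ s, ∑ t, (w s * w t) * S s t := by
    simp_rw [hexp]
    rw [integral_finset_sum _
      (fun s _ => integrable_finset_sum _ fun t _ => (hint2 s t).const_mul _)]
    refine Finset.sum_congr rfl fun s _ => ?_
    rw [integral_finset_sum _ (fun t _ => (hint2 s t).const_mul _)]
    refine Finset.sum_congr rfl fun t _ => ?_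
    rw [MeasureTheory.integral_const_mul, hcov]
  have hdiag : ∑ s, ∑ t, (w s * w t) * S s t = ∑ t, w t ^ 2 * S t t := by
    refine Finset.sum_congr rfl fun s _ => ?_
    rw [Finset.sum_eq_single s (fun t _ hts => by rw [hSdiag (Ne.symm hts), mul_zero])
      (fun h => absurd (Finset.mem_univ s) h)]
    ring
  have hShatpos : ∀ t, 0 < Shat t t := by
    intro t
    have hne : (Pi.single t 1 : Fin n → ℝ) ≠ 0 := by
      intro h
      have := congrFun h t
      simp at this
    have := hShat.dotProduct_mulVec_pos hne
    simpa [mulVec_single, dotProduct_single, single_dotProduct] using this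
  have hbound : ∑ t, w t ^ 2 * S t t ≤ (1 + c) * ∑ t, w t ^ 2 * Shat t t := by
    rw [Finset.mul_sum]
    refine Finset.sum_le_sum fun t _ => ?_
    have h1 : S t t ≤ (1 + c) * Shat t t := (div_le_iff₀ (hShatpos t)).mp (hratio t)
    nlinarith [sq_nonneg (w t)]
  have hfin1 : ∑ t, w t ^ 2 * Shat t t = w ⬝ᵥ Shat *ᵥ w := by
    simp only [dotProduct]
    refine Finset.sum_congr rfl fun t _ => ?_
    simp only [mulVec, dotProduct]
    rw [Finset.sum_eq_single t
      (fun j _ hjt => by rw [hShatdiag (Ne.symm hjt), zero_mul])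
      (fun h => absurd (Finset.mem_univ t) h)]
    ring
  have hfin2 : w ⬝ᵥ Shat *ᵥ w = z ⬝ᵥ M⁻¹ *ᵥ z := by
    have hPS : P * Shat = 1 := nonsing_inv_mul Shat hShat.det_pos.ne'.isUnit
    have hB : M⁻¹ * Xᵀ * P * Shat = M⁻¹ * Xᵀ := by
      rw [Matrix.mul_assoc (M⁻¹ * Xᵀ), hPS, Matrix.mul_one]
    have hBT : (M⁻¹ * Xᵀ * P)ᵀ = P * (X * M⁻¹) := by
      rw [transpose_mul, transpose_mul, transpose_transpose, hPT, hMinvT]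
    have hE : (M⁻¹ * Xᵀ) * (P * (X * M⁻¹)) = M⁻¹ := by
      rw [Matrix.mul_assoc M⁻¹ Xᵀ, ← Matrix.mul_assoc Xᵀ P, ← Matrix.mul_assoc (Xᵀ * P) X,
        ← hMdef, ← Matrix.mul_assoc M⁻¹ M, hMinv, Matrix.one_mul]
    calc w ⬝ᵥ Shat *ᵥ w
        = (z ᵥ* (M⁻¹ * Xᵀ)) ⬝ᵥ ((M⁻¹ * Xᵀ * P)ᵀ *ᵥ z) := by
          rw [dotProduct_mulVec, hwdef, vecMul_vecMul, hB,
            show z ᵥ* (M⁻¹ * Xᵀ * P) = (M⁻¹ * Xᵀ * P)ᵀ *ᵥ z from (mulVec_transpose _ _).symm]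
      _ = (z ᵥ* M⁻¹) ⬝ᵥ z := by
          rw [dotProduct_mulVec, vecMul_vecMul, hBT, hE]
      _ = z ⬝ᵥ M⁻¹ *ᵥ z := by
          rw [← hMinvT, vecMul_transpose, dotProduct_comm, hMinvT]
  calc (∫ ω, (z ⬝ᵥ (M⁻¹ *ᵥ (Xᵀ *ᵥ (P *ᵥ (X *ᵥ θs + η ω))) - θs)) ^ 2 ∂μ)
      = ∫ ω, (w ⬝ᵥ η ω) ^ 2 ∂μ := by simp_rw [key]
    _ = ∑ s, ∑ t, (w s * w t) * S s t := hInt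
    _ = ∑ t, w t ^ 2 * S t t := hdiag
    _ ≤ (1 + c) * ∑ t, w t ^ 2 * Shat t t := hbound
    _ = (1 + c) * (z ⬝ᵥ M⁻¹ *ᵥ z) := by rw [hfin1, hfin2]
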